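/- arXiv:1709.03031 — 8 statements merged into one kernel-verified Lean document; each statement's English description precedes it below -/
import Mathlib

section
/- Suppose ā ≤ b̄. Then for every x with 0 < x ≤ 1 one has ξ(x) < 1; in particular the only solution in [0,1] of the fixed-point equation x = x·ξ(x) is x = 0. (This is the first case of Lemma A.1: when the mutant's mean fitness does not exceed the resident's, the only solution γ̄* ∈ [0,1] of 1 − γ̄* = (1 − γ̄*)·Σᵢ pᵢ aᵢ/(b̄ + aᵢ(1 − γ̄*)) is γ̄* = 1.) -/
/-- Lemma A.1, first case: if the mutant's mean fitness `abar` does not exceed the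
resident's `bbar`, then `ξ x < 1` for every `0 < x ≤ 1`, and the only solution in
`[0,1]` of the fixed-point equation `x = x * ξ x` is `x = 0`. -/
theorem stmt_0 (m : ℕ) (hm : 1 ≤ m) (p a : Fin m → ℝ)
    (hp : ∀ i, 0 < p i ∧ p i < 1) (hpsum : ∑ i, p i = 1)
    (ha : ∀ i, 0 < a i) (bbar : ℝ) (hbbar : 0 < bbar)
    (abar : ℝ) (habar : abar = ∑ i, p i * a i)
    (ξ : ℝ → ℝ) (hξ : ∀ x, ξ x = ∑ i, p i * (a i / (bbar + a i * x)))
    (hab : abar ≤ bbar) :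
    (∀ x : ℝ, 0 < x → x ≤ 1 → ξ x < 1) ∧
    (∀ x : ℝ, 0 ≤ x → x ≤ 1 → x = x * ξ x → x = 0) := by
  have key : ∀ x : ℝ, 0 < x → x ≤ 1 → ξ x < 1 := by
    intro x hx _
    rw [hξ]
    have hlt : ∑ i, p i * (a i / (bbar + a i * x)) < ∑ i, p i * (a i / bbar) := by
      apply Finset.sum_lt_sum_of_nonempty
      · exact Finset.univ_nonempty_iff.mpr ⟨⟨0, hm⟩⟩
      · intro i _
        have hpi := (hp i).1
        have hai := ha i
        have hden : 0 < bbar + a i * x := by positivity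
        have : a i / (bbar + a i * x) < a i / bbar := by
          apply div_lt_div_of_pos_left hai hbbar
          nlinarith
        exact mul_lt_mul_of_pos_left this hpi
    have heq : ∑ i, p i * (a i / bbar) = abar / bbar := by
      rw [habar, Finset.sum_div]
      exact Finset.sum_congr rfl fun i _ => by ring
    calc ∑ i, p i * (a i / (bbar + a i * x)) < abar / bbar := by rw [← heq]; exact hlt
      _ ≤ 1 := (div_le_one hbbar).mpr hab
  refine ⟨key, fun x hx0 hx1 hfix => ?_⟩
  by_contra hne
  have hxpos : 0 < x := lt_of_le_of_ne hx0 (Ne.symm hne)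
  have hξ1 : ξ x = 1 :=
    (mul_left_cancel₀ (ne_of_gt hxpos) (by rw [mul_one]; exact hfix)).symm
  linarith [key x hxpos hx1]
end

section
/- Suppose ā > b̄. Then there is exactly one x with 0 < x ≤ 1 such that ξ(x) = 1, and this x satisfies x < 1. (This is the second case of Lemma A.1: when the mutant's mean fitness exceeds the resident's, the fixed-point equation 1 − γ̄* = (1 − γ̄*)·Σᵢ pᵢ aᵢ/(b̄ + aᵢ(1 − γ̄*)) has exactly two solutions in [0,1], namely γ̄* = 1 and exactly one γ̄* ∈ (0,1).) -/
/-!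
`ξ` is a positive combination of the strictly decreasing, continuous functions
`x ↦ aᵢ / (b̄ + aᵢ x)`, so it is strictly decreasing and continuous on `[0, ∞)`.
Since `ξ 0 = ā / b̄ > 1` and `ξ 1 = Σᵢ pᵢ aᵢ / (b̄ + aᵢ) < Σᵢ pᵢ = 1`, the intermediate
value theorem gives a root of `ξ x = 1` in `(0, 1)`, and strict monotonicity makes it unique.
-/

open Finset Set

theorem StrictAntiOn.existsUnique_mem_Icc_eq {f : ℝ → ℝ} {a b c : ℝ} (hab : a ≤ b)
    (hf : StrictAntiOn f (Icc a b)) (hcont : ContinuousOn f (Icc a b))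
    (hb : f b ≤ c) (ha : c ≤ f a) : ∃! x, x ∈ Icc a b ∧ f x = c := by
  obtain ⟨x, hx, hfx⟩ := intermediate_value_Icc' hab hcont ⟨hb, ha⟩
  exact ⟨x, ⟨hx, hfx⟩, fun y ⟨hy, hfy⟩ => hf.injOn hy hx (hfy.trans hfx.symm)⟩

section Xi

variable {ι : Type*} [Fintype ι] {p a : ι → ℝ} {b : ℝ}

noncomputable def xi (p a : ι → ℝ) (b x : ℝ) : ℝ :=
  ∑ i, p i * (a i / (b + a i * x))

lemma xi_zero (p a : ι → ℝ) (b : ℝ) : xi p a b 0 = (∑ i, p i * a i) / b := by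
  simp only [xi, mul_zero, add_zero, sum_div, mul_div_assoc]

lemma xi_one_lt [Nonempty ι] (hp : ∀ i, 0 < p i) (ha : ∀ i, 0 < a i) (hb : 0 < b) :
    xi p a b 1 < ∑ i, p i := by
  refine sum_lt_sum_of_nonempty univ_nonempty fun i _ => ?_
  have : a i / (b + a i * 1) < 1 := (div_lt_one (by linarith [ha i])).mpr (by linarith)
  simpa using mul_lt_mul_of_pos_left this (hp i)

lemma strictAntiOn_xi [Nonempty ι] (hp : ∀ i, 0 < p i) (ha : ∀ i, 0 < a i) (hb : 0 < b) :
    StrictAntiOn (xi p a b) (Ici 0) := by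
  intro x hx y _ hxy
  refine sum_lt_sum_of_nonempty univ_nonempty fun i _ => mul_lt_mul_of_pos_left ?_ (hp i)
  have hax : 0 ≤ a i * x := mul_nonneg (ha i).le hx
  exact div_lt_div_of_pos_left (ha i) (by linarith) (by nlinarith [ha i])

lemma continuousOn_xi (ha : ∀ i, 0 ≤ a i) (hb : 0 < b) : ContinuousOn (xi p a b) (Ici 0) := by
  refine continuousOn_finsetSum _ fun i _ => continuousOn_const.mul
    (continuousOn_const.div (by fun_prop) fun x hx => ?_)
  have : 0 ≤ a i * x := mul_nonneg (ha i) hx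
  positivity

end Xi

/-- Lemma A.1, second case: if the mutant's mean fitness `abar` exceeds the
resident's `bbar`, then there is exactly one `x` with `0 < x ≤ 1` such that
`ξ x = 1`, and this `x` satisfies `x < 1`. -/
theorem stmt_1 (m : ℕ) (hm : 1 ≤ m) (p a : Fin m → ℝ)
    (hp : ∀ i, 0 < p i ∧ p i < 1) (hpsum : ∑ i, p i = 1)
    (ha : ∀ i, 0 < a i) (bbar : ℝ) (hbbar : 0 < bbar)
    (abar : ℝ) (habar : abar = ∑ i, p i * a i)
    (ξ : ℝ → ℝ) (hξ : ∀ x, ξ x = ∑ i, p i * (a i / (bbar + a i * x)))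
    (hab : bbar < abar) :
    (∃! x : ℝ, 0 < x ∧ x ≤ 1 ∧ ξ x = 1) ∧
    (∀ x : ℝ, 0 < x → x ≤ 1 → ξ x = 1 → x < 1) := by
  have : Nonempty (Fin m) := Fin.pos_iff_nonempty.mp hm
  obtain rfl : ξ = xi p a bbar := funext hξ
  have hpos i := (hp i).1
  have h0 : 1 < xi p a bbar 0 := by rwa [xi_zero, one_lt_div hbbar, ← habar]
  have h1 : xi p a bbar 1 < 1 := hpsum ▸ xi_one_lt hpos ha hbbar
  obtain ⟨x, ⟨hx, hx1⟩, huniq⟩ := StrictAntiOn.existsUnique_mem_Icc_eq zero_le_one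
    ((strictAntiOn_xi hpos ha hbbar).mono Icc_subset_Ici_self)
    ((continuousOn_xi (fun i => (ha i).le) hbbar).mono Icc_subset_Ici_self) h1.le h0.le
  have hlt : ∀ y, y ≤ 1 → xi p a bbar y = 1 → y < 1 := fun y hy hy1 =>
    hy.lt_of_ne (by rintro rfl; exact h1.ne hy1)
  have hx0 : 0 < x := hx.1.lt_of_ne (by rintro rfl; exact h0.ne' hx1)
  exact ⟨⟨x, ⟨hx0, hx.2, hx1⟩, fun y ⟨hy0, hy1, hy⟩ => huniq y ⟨⟨hy0.le, hy1⟩, hy⟩⟩,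
    fun y _ hy1 hy => hlt y hy1 hy⟩
end

section
/- Suppose ā > b̄, and let ρ ∈ (0,1) satisfy Σᵢ pᵢ · aᵢ/(b̄ + aᵢ ρ) = 1 (i.e., ρ is the large-population fixation probability of the mutant type). Then ρ ≤ 1 − b̄/ā, and equality holds if and only if aᵢ = ā for every i ∈ {1,…,m}. In other words, any heterogeneity in mutant fitness strictly decreases a beneficial mutant's fixation probability below its value 1 − b̄/ā in a homogeneous environment. -/
/-! Since `f x = x / (b̄ + x ρ)` is strictly concave on `(0, ∞)`, Jensen's inequality turns the
fixation equation `∑ pᵢ f(aᵢ) = 1` into `1 ≤ f(ā) = ā / (b̄ + ā ρ)`, that is `b̄ + ā ρ ≤ ā`, with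
equality exactly when all the `aᵢ` coincide. -/

open Set

theorem strictConcaveOn_div_add_mul {b ρ : ℝ} (hb : 0 < b) (hρ : 0 < ρ) :
    StrictConcaveOn ℝ (Ioi 0) fun x => x / (b + x * ρ) := by
  refine ⟨convex_Ioi 0, fun x hx y hy hxy s t hs ht hst => ?_⟩
  simp only [mem_Ioi, smul_eq_mul] at *
  obtain rfl : t = 1 - s := by linarith
  have hEx : 0 < b + x * ρ := by positivity
  have hEy : 0 < b + y * ρ := by positivity
  have hEm : 0 < b + (s * x + (1 - s) * y) * ρ := by positivity
  have hgap : (s * x + (1 - s) * y) / (b + (s * x + (1 - s) * y) * ρ)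
        - (s * (x / (b + x * ρ)) + (1 - s) * (y / (b + y * ρ)))
      = s * (1 - s) * b * ρ * (x - y) ^ 2
        / ((b + x * ρ) * (b + y * ρ) * (b + (s * x + (1 - s) * y) * ρ)) := by
    field_simp
    ring
  have := sub_ne_zero.mpr hxy
  have : 0 < s * (1 - s) * b * ρ * (x - y) ^ 2
      / ((b + x * ρ) * (b + y * ρ) * (b + (s * x + (1 - s) * y) * ρ)) := by positivity
  linarith

theorem stmt_5_general (m : ℕ) (p a : Fin m → ℝ)
    (hp : ∀ i, 0 < p i ∧ p i < 1) (hpsum : ∑ i, p i = 1)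
    (ha : ∀ i, 0 < a i) (bbar : ℝ) (hbbar : 0 < bbar)
    (abar : ℝ) (habar : abar = ∑ i, p i * a i)
    (hab : bbar < abar)
    (ρ : ℝ) (hρ0 : 0 < ρ)
    (hfix : ∑ i, p i * (a i / (bbar + a i * ρ)) = 1) :
    ρ ≤ 1 - bbar / abar ∧ (ρ = 1 - bbar / abar ↔ ∀ i, a i = abar) := by
  have hf := strictConcaveOn_div_add_mul hbbar hρ0
  have hpos : ∀ i ∈ Finset.univ, 0 < p i := fun i _ => (hp i).1
  have hmem : ∀ i ∈ Finset.univ, a i ∈ Ioi 0 := fun i _ => ha i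
  have hmean : ∑ i, p i • a i = abar := habar.symm
  have hfix' : ∑ i, p i • (a i / (bbar + a i * ρ)) = 1 := hfix
  have habar0 : 0 < abar := hbbar.trans hab
  have hE : 0 < bbar + abar * ρ := by positivity
  have hjensen : 1 ≤ abar / (bbar + abar * ρ) := by
    simpa only [hmean, hfix'] using
      hf.concaveOn.le_map_sum (fun i hi => (hpos i hi).le) hpsum hmem
  have hjensen_eq : abar / (bbar + abar * ρ) = 1 ↔ ∀ i, a i = abar := by
    simpa only [hmean, hfix', Finset.mem_univ, true_imp_iff] using
      hf.map_sum_eq_iff hpos hpsum hmem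
  have hgap : 1 - bbar / abar - ρ = (abar - (bbar + abar * ρ)) / abar := by
    field_simp
    ring
  rw [le_div_iff₀ hE, one_mul] at hjensen
  constructor
  · rw [← sub_nonneg, hgap]
    exact div_nonneg (sub_nonneg.mpr hjensen) habar0.le
  · rw [← hjensen_eq, div_eq_one_iff_eq hE.ne', eq_comm, ← sub_eq_zero, hgap, div_eq_zero_iff,
      sub_eq_zero, or_iff_left habar0.ne', eq_comm]

/-- Mutant heterogeneity suppresses selection: if `abar > bbar` and `ρ ∈ (0,1)`
satisfies `∑ i, p i * a i / (bbar + a i * ρ) = 1`, then `ρ ≤ 1 - bbar/abar`,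
with equality iff `a i = abar` for every `i`. -/
theorem stmt_5 (m : ℕ) (hm : 1 ≤ m) (p a : Fin m → ℝ)
    (hp : ∀ i, 0 < p i ∧ p i < 1) (hpsum : ∑ i, p i = 1)
    (ha : ∀ i, 0 < a i) (bbar : ℝ) (hbbar : 0 < bbar)
    (abar : ℝ) (habar : abar = ∑ i, p i * a i)
    (hab : bbar < abar)
    (ρ : ℝ) (hρ0 : 0 < ρ) (hρ1 : ρ < 1)
    (hfix : ∑ i, p i * (a i / (bbar + a i * ρ)) = 1) :
    ρ ≤ 1 - bbar / abar ∧ (ρ = 1 - bbar / abar ↔ ∀ i, a i = abar) :=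
  stmt_5_general m p a hp hpsum ha bbar hbbar abar habar hab ρ hρ0 hfix
end

section
/- Let a₁, a₂, b₁, b₂ > 0 be real numbers. Then (1/2)·(a₁/(a₁ + b₂) + a₂/(a₂ + b₁)) = (1/2)·(b₁/(b₁ + a₂) + b₂/(b₂ + a₁)) if and only if a₁·a₂ = b₁·b₂. (This is the neutrality condition ρ_A = ρ_B for the Moran process with population size N = 2 and two environments, where the mutant's fixation probability is ρ_A = (1/2)(a₁/(a₁+b₂) + a₂/(a₂+b₁)) and the resident's is ρ_B = (1/2)(b₁/(b₁+a₂) + b₂/(b₂+a₁)).) -/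
/-! Clearing denominators, `ρ_A - ρ_B = (a₁ a₂ - b₁ b₂) / ((a₁ + b₂) (a₂ + b₁))`, and the
denominator is positive. -/

theorem div_add_div_sub_div_add_div {K : Type*} [Field K] (x y u v : K)
    (hxv : x + v ≠ 0) (hyu : y + u ≠ 0) :
    x / (x + v) + y / (y + u) - (u / (u + y) + v / (v + x)) =
      2 * (x * y - u * v) / ((x + v) * (y + u)) := by
  rw [add_comm u y, add_comm v x]
  field_simp
  ring

/-- Neutrality condition for the Moran process with `N = 2` and two environments:
`ρ_A = ρ_B` iff `a₁ a₂ = b₁ b₂`. -/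
theorem stmt_6 (a₁ a₂ b₁ b₂ : ℝ) (ha₁ : 0 < a₁) (ha₂ : 0 < a₂)
    (hb₁ : 0 < b₁) (hb₂ : 0 < b₂) :
    (1 / 2) * (a₁ / (a₁ + b₂) + a₂ / (a₂ + b₁)) =
      (1 / 2) * (b₁ / (b₁ + a₂) + b₂ / (b₂ + a₁)) ↔ a₁ * a₂ = b₁ * b₂ := by
  have hden : 0 < (a₁ + b₂) * (a₂ + b₁) := by positivity
  rw [← sub_eq_zero, ← mul_sub,
    div_add_div_sub_div_add_div a₁ a₂ b₁ b₂ (by positivity) (by positivity)]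
  simp [hden.ne', sub_eq_zero]
end

section
/- Suppose ā > b̄ > 0 and Σᵢ pᵢ a′ᵢ = 0. Let ρ : ℝ → ℝ and ε₀ > 0 be such that for every ε ∈ (0, ε₀): ρ(ε) ∈ (0,1), b̄ + (ā + ε a′ᵢ)·ρ(ε) > 0 for all i, and Σᵢ pᵢ · (ā + ε a′ᵢ)/(b̄ + (ā + ε a′ᵢ)·ρ(ε)) = 1. Then ρ(ε) − (1 − b̄/ā) = O(ε²) as ε → 0⁺; in particular the first-order coefficient in the weak-heterogeneity expansion of the fixation probability vanishes (c₁ = 0). -/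
/-!
Write `aᵢ = ā + ε a'ᵢ`, `Dᵢ = b̄ + aᵢ ρ` and `d = ρ - (1 - b̄/ā)`. Splitting the fixation
equation along `aᵢ = ā + ε a'ᵢ`, and multiplying it by `ρ` (using `aᵢ ρ = Dᵢ - b̄`), gives two
linear relations whose combination is `ā d = b̄ ε ∑ pᵢ a'ᵢ / Dᵢ`. Since the `a'ᵢ` are centred,
the last sum equals `∑ pᵢ a'ᵢ (1/Dᵢ - 1/ā)`, and `Dᵢ - ā = ā d + ε a'ᵢ ρ` is `O(|d| + ε)`.
Hence `|d| ≲ ε |d| + ε²`, and absorbing `ε |d|` gives `|d| = O(ε²)`.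
-/

open Finset Filter Asymptotics Topology

section WeightedSums

variable {ι : Type*} [Fintype ι] {p : ι → ℝ}

lemma sum_mul_div_add_mul_mul_eq {x : ι → ℝ} {b r : ℝ} (hD : ∀ i, b + x i * r ≠ 0) :
    (∑ i, p i * (x i / (b + x i * r))) * r = ∑ i, p i - b * ∑ i, p i / (b + x i * r) := by
  rw [sum_mul, mul_sum, ← sum_sub_distrib]
  refine sum_congr rfl fun i _ => ?_
  field_simp [hD i]
  ring

lemma abs_sum_mul_div_le_of_sum_mul_eq_zero (hp : ∀ i, 0 ≤ p i) (hpsum : ∑ i, p i = 1)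
    {y D : ι → ℝ} {c M K L : ℝ} (hy₀ : ∑ i, p i * y i = 0) (hy : ∀ i, |y i| ≤ M)
    (hDc : ∀ i, |D i - c| ≤ K) (hL : 0 < L) (hcD : ∀ i, L ≤ c * D i) :
    |∑ i, p i * y i / D i| ≤ M * K / L := by
  have hcentre : ∑ i, p i * y i / D i = ∑ i, p i * y i * (c - D i) / (c * D i) := by
    have hsub : ∑ i, p i * y i / D i = ∑ i, (p i * y i / D i - p i * y i / c) := by
      rw [sum_sub_distrib, ← sum_div, hy₀, zero_div, sub_zero]
    rw [hsub]
    refine sum_congr rfl fun i _ => ?_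
    have hcD₀ : c * D i ≠ 0 := (hL.trans_le (hcD i)).ne'
    field_simp [left_ne_zero_of_mul hcD₀, right_ne_zero_of_mul hcD₀]
  have hterm : ∀ i, |p i * y i * (c - D i) / (c * D i)| ≤ p i * (M * K / L) := by
    intro i
    have hcD₀ : 0 < c * D i := hL.trans_le (hcD i)
    have hyD : |y i| * |D i - c| ≤ M * K :=
      mul_le_mul (hy i) (hDc i) (abs_nonneg _) ((abs_nonneg _).trans (hy i))
    rw [abs_div, abs_mul, abs_mul, abs_of_nonneg (hp i), abs_of_pos hcD₀, abs_sub_comm,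
      mul_assoc, mul_div_assoc]
    exact mul_le_mul_of_nonneg_left
      (div_le_div₀ ((mul_nonneg (abs_nonneg _) (abs_nonneg _)).trans hyD) hyD hL (hcD i)) (hp i)
  calc |∑ i, p i * y i / D i| ≤ ∑ i, |p i * y i * (c - D i) / (c * D i)| :=
        hcentre ▸ abs_sum_le_sum_abs _ _
    _ ≤ ∑ i, p i * (M * K / L) := sum_le_sum fun i _ => hterm i
    _ = M * K / L := by rw [← sum_mul, hpsum, one_mul]

end WeightedSums
section FixationEquation

variable {ι : Type*} [Fintype ι] {p a' : ι → ℝ} {abar bbar ε r : ℝ}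

lemma mul_sub_one_sub_div_eq_of_sum_eq_one (hpsum : ∑ i, p i = 1) (ha : abar ≠ 0)
    (hD : ∀ i, bbar + (abar + ε * a' i) * r ≠ 0)
    (heq : ∑ i, p i * ((abar + ε * a' i) / (bbar + (abar + ε * a' i) * r)) = 1) :
    abar * (r - (1 - bbar / abar)) =
      bbar * ε * ∑ i, p i * a' i / (bbar + (abar + ε * a' i) * r) := by
  have hmul := sum_mul_div_add_mul_mul_eq (p := p) hD
  rw [heq, hpsum, one_mul] at hmul
  have hsplit : ∑ i, p i * ((abar + ε * a' i) / (bbar + (abar + ε * a' i) * r)) =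
      abar * ∑ i, p i / (bbar + (abar + ε * a' i) * r) +
        ε * ∑ i, p i * a' i / (bbar + (abar + ε * a' i) * r) := by
    rw [mul_sum, mul_sum, ← sum_add_distrib]
    refine sum_congr rfl fun i _ => ?_
    ring
  rw [heq] at hsplit
  rw [mul_sub, mul_sub, mul_div_cancel₀ _ ha]
  linear_combination abar * hmul + bbar * hsplit

lemma abs_sub_one_sub_div_le_of_sum_eq_one (hp : ∀ i, 0 ≤ p i) (hpsum : ∑ i, p i = 1)
    (ha' : ∑ i, p i * a' i = 0) {M : ℝ} (hM : ∀ i, |a' i| ≤ M) (hb : 0 < bbar)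
    (ha : 0 < abar) (hε : 0 ≤ ε) (hεM : ε * M ≤ abar / 2) (hr₀ : 0 ≤ r) (hr₁ : r ≤ 1)
    (heq : ∑ i, p i * ((abar + ε * a' i) / (bbar + (abar + ε * a' i) * r)) = 1) :
    |r - (1 - bbar / abar)| ≤ 2 * M ^ 2 / abar ^ 2 * ε ^ 2 := by
  set d := r - (1 - bbar / abar)
  have hDb : ∀ i, bbar ≤ bbar + (abar + ε * a' i) * r := fun i => by
    have hεa : -(ε * M) ≤ ε * a' i := by
      rw [← mul_neg]
      exact mul_le_mul_of_nonneg_left (neg_le_of_abs_le (hM i)) hε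
    exact le_add_of_nonneg_right (mul_nonneg (by linarith) hr₀)
  have hdev : ∀ i, |bbar + (abar + ε * a' i) * r - abar| ≤ abar * |d| + ε * M := fun i => by
    have hlin : bbar + (abar + ε * a' i) * r - abar = abar * d + ε * a' i * r := by
      simp only [d]; field_simp; ring
    have hεa : |ε * a' i * r| ≤ ε * M := by
      rw [abs_mul, abs_mul, abs_of_nonneg hε, abs_of_nonneg hr₀]
      calc ε * |a' i| * r ≤ ε * |a' i| := mul_le_of_le_one_right (by positivity) hr₁
        _ ≤ ε * M := mul_le_mul_of_nonneg_left (hM i) hε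
    rw [hlin]
    calc _ ≤ |abar * d| + |ε * a' i * r| := abs_add_le _ _
      _ ≤ abar * |d| + ε * M := by rw [abs_mul, abs_of_pos ha]; linarith
  have hT := abs_sum_mul_div_le_of_sum_mul_eq_zero hp hpsum ha' hM hdev (mul_pos ha hb)
    fun i => mul_le_mul_of_nonneg_left (hDb i) ha.le
  have hd := mul_sub_one_sub_div_eq_of_sum_eq_one hpsum ha.ne'
    (fun i => (hb.trans_le (hDb i)).ne') heq
  have hdε : abar * |d| ≤ ε * M * |d| + ε ^ 2 * M ^ 2 / abar := by
    calc abar * |d| = bbar * ε * |∑ i, p i * a' i / (bbar + (abar + ε * a' i) * r)| := by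
          rw [← abs_of_pos ha, ← abs_mul, hd, abs_mul, abs_mul, abs_of_pos hb, abs_of_nonneg hε,
            abs_of_pos ha]
      _ ≤ bbar * ε * (M * (abar * |d| + ε * M) / (abar * bbar)) := by gcongr
      _ = ε * M * |d| + ε ^ 2 * M ^ 2 / abar := by field_simp
  have habsorb : abar / 2 * |d| ≤ ε ^ 2 * M ^ 2 / abar := by
    linarith [mul_le_mul_of_nonneg_right hεM (abs_nonneg d)]
  calc |d| = 2 / abar * (abar / 2 * |d|) := by field_simp
    _ ≤ 2 / abar * (ε ^ 2 * M ^ 2 / abar) := by gcongr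
    _ = 2 * M ^ 2 / abar ^ 2 * ε ^ 2 := by ring

end FixationEquation

theorem stmt_10_general (m : ℕ) (p a' : Fin m → ℝ)
    (hp : ∀ i, 0 < p i ∧ p i < 1) (hpsum : ∑ i, p i = 1)
    (abar bbar : ℝ) (hbbar : 0 < bbar) (hab : bbar < abar)
    (ha' : ∑ i, p i * a' i = 0)
    (ρ : ℝ → ℝ) (ε₀ : ℝ) (hε₀ : 0 < ε₀)
    (hρ : ∀ ε : ℝ, 0 < ε → ε < ε₀ →
      (0 < ρ ε ∧ ρ ε < 1) ∧
      (∀ i, 0 < bbar + (abar + ε * a' i) * ρ ε) ∧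
      ∑ i, p i * ((abar + ε * a' i) / (bbar + (abar + ε * a' i) * ρ ε)) = 1) :
    (fun ε => ρ ε - (1 - bbar / abar)) =O[nhdsWithin 0 (Set.Ioi 0)]
      (fun ε => ε ^ 2) := by
  have ha : 0 < abar := hbbar.trans hab
  set M := ∑ i, |a' i|
  have hM : ∀ i, |a' i| ≤ M := fun i =>
    single_le_sum (fun j _ => abs_nonneg (a' j)) (mem_univ i)
  have hsmall : ∀ᶠ ε in 𝓝[>] 0, ε * M < abar / 2 :=
    ((continuous_mul_const M).tendsto' 0 0 (zero_mul M)).mono_left nhdsWithin_le_nhds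
      |>.eventually_lt_const (half_pos ha)
  refine IsBigO.of_bound (2 * M ^ 2 / abar ^ 2) ?_
  filter_upwards [Ioo_mem_nhdsGT hε₀, hsmall] with ε ⟨hε, hεε₀⟩ hεM
  obtain ⟨⟨hr₀, hr₁⟩, -, heq⟩ := hρ ε hε hεε₀
  rw [Real.norm_eq_abs, norm_pow, Real.norm_eq_abs, sq_abs]
  exact abs_sub_one_sub_div_le_of_sum_eq_one (fun i => (hp i).1.le) hpsum ha' hM hbbar ha
    hε.le hεM.le hr₀.le hr₁.le heq

/-- Weak-heterogeneity expansion: the first-order coefficient vanishes, i.e.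
`ρ(ε) - (1 - bbar/abar) = O(ε²)` as `ε → 0⁺`. -/
theorem stmt_10 (m : ℕ) (hm : 1 ≤ m) (p a' : Fin m → ℝ)
    (hp : ∀ i, 0 < p i ∧ p i < 1) (hpsum : ∑ i, p i = 1)
    (abar bbar : ℝ) (hbbar : 0 < bbar) (hab : bbar < abar)
    (ha' : ∑ i, p i * a' i = 0)
    (ρ : ℝ → ℝ) (ε₀ : ℝ) (hε₀ : 0 < ε₀)
    (hρ : ∀ ε : ℝ, 0 < ε → ε < ε₀ →
      (0 < ρ ε ∧ ρ ε < 1) ∧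
      (∀ i, 0 < bbar + (abar + ε * a' i) * ρ ε) ∧
      ∑ i, p i * ((abar + ε * a' i) / (bbar + (abar + ε * a' i) * ρ ε)) = 1) :
    (fun ε => ρ ε - (1 - bbar / abar)) =O[nhdsWithin 0 (Set.Ioi 0)]
      (fun ε => ε ^ 2) :=
  stmt_10_general m p a' hp hpsum abar bbar hbbar hab ha' ρ ε₀ hε₀ hρ
end

section
/- Let γ₁,…,γ_m be real numbers with γ̄ = Σᵢ pᵢ γᵢ, suppose b̄ + aᵢ(1 − γ̄) ≠ 0 and γᵢ = b̄/(b̄ + aᵢ(1 − γ̄)) for every i. For a multi-index n = (n₁,…,n_m) of natural numbers, write γ^n = Πᵢ γᵢ^{nᵢ}, |n| = Σᵢ nᵢ, and let n⁻ᵢ (resp. n⁺ᵢ) be obtained from n by decreasing (resp. increasing) the i-th coordinate by one. Then for every multi-index n: Σᵢ nᵢ b̄ · γ^{n⁻ᵢ} + Σᵢ pᵢ (Σⱼ nⱼ aⱼ) · γ^{n⁺ᵢ} = (|n| b̄ + Σⱼ nⱼ aⱼ) · γ^n, where terms with nᵢ = 0 in the first sum are understood to vanish. (This is the martingale identity Eq.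 A.11: the function n ↦ γ^n is harmonic for the limiting transition probabilities Q̃ᵢ±.) -/
/-- The martingale identity (Eq. A.11): the function `n ↦ γ^n` is harmonic for
the limiting transition probabilities. -/
theorem stmt_12 (m : ℕ) (hm : 1 ≤ m) (p a : Fin m → ℝ)
    (hp : ∀ i, 0 < p i ∧ p i < 1) (hpsum : ∑ i, p i = 1)
    (ha : ∀ i, 0 < a i) (bbar : ℝ) (hbbar : 0 < bbar)
    (γ : Fin m → ℝ) (γbar : ℝ) (hγbar : γbar = ∑ i, p i * γ i)
    (hne : ∀ i, bbar + a i * (1 - γbar) ≠ 0)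
    (hγ : ∀ i, γ i = bbar / (bbar + a i * (1 - γbar)))
    (n : Fin m → ℕ) :
    (∑ i, (n i : ℝ) * bbar * ∏ j, γ j ^ (Function.update n i (n i - 1) j)) +
      (∑ i, p i * (∑ j, (n j : ℝ) * a j) *
        ∏ j, γ j ^ (Function.update n i (n i + 1) j)) =
    ((∑ i, (n i : ℝ)) * bbar + ∑ j, (n j : ℝ) * a j) * ∏ j, γ j ^ n j := by
  have hγb : ∀ i, bbar = γ i * (bbar + a i * (1 - γbar)) := by
    intro i; rw [hγ i, div_mul_cancel₀ _ (hne i)]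
  have key : ∀ (i : Fin m) (k : ℕ),
      ∏ j, γ j ^ (Function.update n i k j)
        = γ i ^ k * ∏ j ∈ Finset.univ.erase i, γ j ^ n j := by
    intro i k
    rw [← Finset.mul_prod_erase _ _ (Finset.mem_univ i), Function.update_self]
    congr 1
    refine Finset.prod_congr rfl fun j hj => ?_
    rw [Function.update_of_ne (Finset.ne_of_mem_erase hj)]
  have hP : ∀ i : Fin m, ∏ j, γ j ^ n j
      = γ i ^ n i * ∏ j ∈ Finset.univ.erase i, γ j ^ n j :=
    fun i => (Finset.mul_prod_erase _ _ (Finset.mem_univ i)).symm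
  have h1 : ∀ i, (n i : ℝ) * bbar * ∏ j, γ j ^ (Function.update n i (n i - 1) j)
      = (n i : ℝ) * (bbar + a i * (1 - γbar)) * ∏ j, γ j ^ n j := by
    intro i
    rcases Nat.eq_zero_or_pos (n i) with h | h
    · simp [h]
    · rw [key i (n i - 1), hP i]
      have hpow : γ i ^ n i = γ i ^ (n i - 1) * γ i := by
        rw [← pow_succ, Nat.sub_add_cancel h]
      rw [hpow]
      conv_lhs => rw [hγb i]
      ring
  have h2 : ∀ i, p i * (∑ j, (n j : ℝ) * a j)
        * ∏ j, γ j ^ (Function.update n i (n i + 1) j)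
      = p i * γ i * ((∑ j, (n j : ℝ) * a j) * ∏ j, γ j ^ n j) := by
    intro i
    rw [key i (n i + 1), hP i, pow_succ]
    ring
  rw [Finset.sum_congr rfl fun i _ => h1 i, Finset.sum_congr rfl fun i _ => h2 i,
    ← Finset.sum_mul, ← Finset.sum_mul, ← hγbar]
  have e1 : ∑ i, (n i : ℝ) * (bbar + a i * (1 - γbar))
      = (∑ i, (n i : ℝ)) * bbar + (∑ j, (n j : ℝ) * a j) * (1 - γbar) := by
    rw [Finset.sum_mul, Finset.sum_mul, ← Finset.sum_add_distrib]
    exact Finset.sum_congr rfl fun i _ => by ring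
  rw [e1]
  ring
end

section
/- Let Nⱼ : ℕ → ℕ (j = 1,…,m) be functions with Σⱼ Nⱼ(N) = N for all N and Nⱼ(N)/N → pⱼ as N → ∞. Fix a multi-index n = (n₁,…,n_m) of natural numbers with |n| = Σⱼ nⱼ > 0, and for N large enough that nⱼ ≤ Nⱼ(N) for all j and |n| < N, define Qᵢ⁻(n; N) = [ |n| Σⱼ bⱼ(Nⱼ(N) − nⱼ) / ( |n| Σⱼ bⱼ(Nⱼ(N) − nⱼ) + (N − |n|) Σⱼ aⱼ nⱼ ) ] · (nᵢ/|n|) and Qᵢ⁺(n; N) = [ (N − |n|) Σⱼ aⱼ nⱼ / ( |n| Σⱼ bⱼ(Nⱼ(N) − nⱼ) + (N − |n|) Σⱼ aⱼ nⱼ ) ] · ((Nᵢ(N) − nᵢ)/(N − |n|)). Then, as N → ∞, Qᵢ⁻(n; N) → nᵢ b̄ / (|n| b̄ + Σⱼ nⱼ aⱼ) and Qᵢ⁺(n; N) → pᵢ (Σⱼ nⱼ aⱼ) / (|n| b̄ + Σⱼ nⱼ aⱼ), where b̄ = Σⱼ pⱼ bⱼ. -/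
open Filter

/-- Convergence of the conditional Moran transition probabilities to the limiting
transition probabilities `Q̃ᵢ±(n)` as the population size `N → ∞`. -/
theorem stmt_13 (m : ℕ) (hm : 1 ≤ m) (p a b : Fin m → ℝ)
    (hp : ∀ j, 0 < p j ∧ p j < 1) (hpsum : ∑ j, p j = 1)
    (ha : ∀ j, 0 < a j) (hb : ∀ j, 0 < b j)
    (Nf : Fin m → ℕ → ℕ)
    (hNsum : ∀ N : ℕ, ∑ j, Nf j N = N)
    (hNlim : ∀ j, Filter.Tendsto (fun N : ℕ => (Nf j N : ℝ) / N)
      Filter.atTop (nhds (p j)))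
    (n : Fin m → ℕ) (hn : 0 < ∑ j, n j)
    (i : Fin m) :
    Filter.Tendsto (fun N : ℕ =>
        ((∑ j, (n j : ℝ)) * (∑ j, b j * ((Nf j N : ℝ) - (n j : ℝ))) /
          ((∑ j, (n j : ℝ)) * (∑ j, b j * ((Nf j N : ℝ) - (n j : ℝ))) +
            ((N : ℝ) - ∑ j, (n j : ℝ)) * (∑ j, a j * (n j : ℝ)))) *
          ((n i : ℝ) / ∑ j, (n j : ℝ)))
      Filter.atTop
      (nhds ((n i : ℝ) * (∑ j, p j * b j) /
        ((∑ j, (n j : ℝ)) * (∑ j, p j * b j) + ∑ j, (n j : ℝ) * a j))) ∧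
    Filter.Tendsto (fun N : ℕ =>
        (((N : ℝ) - ∑ j, (n j : ℝ)) * (∑ j, a j * (n j : ℝ)) /
          ((∑ j, (n j : ℝ)) * (∑ j, b j * ((Nf j N : ℝ) - (n j : ℝ))) +
            ((N : ℝ) - ∑ j, (n j : ℝ)) * (∑ j, a j * (n j : ℝ)))) *
          (((Nf i N : ℝ) - (n i : ℝ)) / ((N : ℝ) - ∑ j, (n j : ℝ))))
      Filter.atTop
      (nhds (p i * (∑ j, (n j : ℝ) * a j) /
        ((∑ j, (n j : ℝ)) * (∑ j, p j * b j) + ∑ j, (n j : ℝ) * a j))) := by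
  have hFin : Nonempty (Fin m) := ⟨⟨0, hm⟩⟩
  set s : ℝ := ∑ j, (n j : ℝ) with hs_def
  set Sa : ℝ := ∑ j, a j * (n j : ℝ) with hSa_def
  set bbar : ℝ := ∑ j, p j * b j with hbbar_def
  have hs : (0:ℝ) < s := by
    have : (0:ℝ) < ((∑ j, n j : ℕ) : ℝ) := by exact_mod_cast hn
    simpa [hs_def, Nat.cast_sum] using this
  have hbbar : 0 < bbar :=
    Finset.sum_pos (fun j _ => mul_pos (hp j).1 (hb j)) Finset.univ_nonempty
  have hSa0 : 0 ≤ Sa :=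
    Finset.sum_nonneg fun j _ => mul_nonneg (ha j).le (Nat.cast_nonneg _)
  have hSan : ∑ j, (n j : ℝ) * a j = Sa := by
    simp [hSa_def, mul_comm]
  have hD : 0 < s * bbar + Sa := by
    have := mul_pos hs hbbar; linarith
  have h0 : ∀ c : ℝ, Tendsto (fun N : ℕ => c / N) atTop (nhds 0) :=
    fun c => tendsto_const_div_atTop_nhds_zero_nat c
  have hcanc : ∀ (x y : ℝ) (N : ℝ), N ≠ 0 → (x/N)/(y/N) = x/y := by
    intro x y N hN
    rcases eq_or_ne y 0 with h|h
    · simp [h]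
    · field_simp
  -- Sb N / N → bbar
  have hSb : Tendsto (fun N : ℕ => (∑ j, b j * ((Nf j N : ℝ) - (n j : ℝ))) / N)
      atTop (nhds bbar) := by
    have key : Tendsto (fun N : ℕ => ∑ j, (b j * ((Nf j N : ℝ)/N - (n j : ℝ)/N)))
        atTop (nhds (∑ j, b j * (p j - 0))) :=
      tendsto_finset_sum _ fun j _ => ((hNlim j).sub (h0 _)).const_mul (b j)
    have : (∑ j, b j * (p j - 0)) = bbar := by
      simp [hbbar_def, mul_comm]
    rw [this] at key
    refine key.congr fun N => ?_
    rw [Finset.sum_div]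
    exact Finset.sum_congr rfl fun j _ => by ring
  -- (N - s)/N → 1
  have hr : Tendsto (fun N : ℕ => ((N : ℝ) - s)/N) atTop (nhds 1) := by
    have key : Tendsto (fun N : ℕ => 1 - s / N) atTop (nhds (1 - 0)) :=
      tendsto_const_nhds.sub (h0 s)
    rw [sub_zero] at key
    refine key.congr' ?_
    filter_upwards [eventually_ge_atTop 1] with N hN
    have hN0 : (N:ℝ) ≠ 0 := Nat.cast_ne_zero.mpr (by omega)
    field_simp
  -- (Nf i N - n i)/N → p i
  have hNi : Tendsto (fun N : ℕ => ((Nf i N : ℝ) - (n i : ℝ))/N) atTop (nhds (p i)) := by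
    have key := (hNlim i).sub (h0 (n i))
    rw [sub_zero] at key
    exact key.congr fun N => (sub_div _ _ _).symm
  -- denominator / N → s * bbar + Sa
  have hDen : Tendsto (fun N : ℕ =>
      (s * (∑ j, b j * ((Nf j N : ℝ) - (n j : ℝ))) + ((N:ℝ) - s) * Sa) / N)
      atTop (nhds (s * bbar + Sa)) := by
    have key := (hSb.const_mul s).add (hr.mul_const Sa)
    rw [one_mul] at key
    refine key.congr fun N => ?_
    rw [add_div, ← mul_div_assoc, div_mul_eq_mul_div]
  constructor
  · -- Q⁻
    have key : Tendsto (fun N : ℕ =>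
        ((s * (∑ j, b j * ((Nf j N : ℝ) - (n j : ℝ))) / N) /
          ((s * (∑ j, b j * ((Nf j N : ℝ) - (n j : ℝ))) + ((N:ℝ) - s) * Sa) / N)) *
          ((n i : ℝ) / s))
        atTop (nhds ((s * bbar / (s * bbar + Sa)) * ((n i : ℝ) / s))) := by
      have h1 : Tendsto (fun N : ℕ => s * (∑ j, b j * ((Nf j N : ℝ) - (n j : ℝ))) / N)
          atTop (nhds (s * bbar)) := by
        refine (hSb.const_mul s).congr fun N => ?_
        rw [mul_div_assoc]
      exact (h1.div hDen hD.ne').mul_const _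
    have keq : (fun N : ℕ =>
        ((s * (∑ j, b j * ((Nf j N : ℝ) - (n j : ℝ))) / N) /
          ((s * (∑ j, b j * ((Nf j N : ℝ) - (n j : ℝ))) + ((N:ℝ) - s) * Sa) / N)) *
          ((n i : ℝ) / s)) =ᶠ[atTop] (fun N : ℕ =>
        (s * (∑ j, b j * ((Nf j N : ℝ) - (n j : ℝ))) /
          (s * (∑ j, b j * ((Nf j N : ℝ) - (n j : ℝ))) + ((N:ℝ) - s) * Sa)) *
          ((n i : ℝ) / s)) := by
      filter_upwards [eventually_ge_atTop 1] with N hN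
      have hN0 : (N:ℝ) ≠ 0 := Nat.cast_ne_zero.mpr (by omega)
      rw [hcanc _ _ _ hN0]
    have := key.congr' keq
    rw [hSan]
    convert this using 2
    field_simp
  · -- Q⁺
    have key : Tendsto (fun N : ℕ =>
        ((((N:ℝ) - s) * Sa / N) /
          ((s * (∑ j, b j * ((Nf j N : ℝ) - (n j : ℝ))) + ((N:ℝ) - s) * Sa) / N)) *
          ((((Nf i N : ℝ) - (n i : ℝ))/N) / (((N:ℝ) - s)/N)))
        atTop (nhds ((Sa / (s * bbar + Sa)) * (p i / 1))) := by
      have h1 : Tendsto (fun N : ℕ => ((N:ℝ) - s) * Sa / N) atTop (nhds Sa) := by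
        have := hr.mul_const Sa
        rw [one_mul] at this
        refine this.congr fun N => ?_
        ring
      exact ((h1.div hDen hD.ne')).mul (hNi.div hr one_ne_zero)
    rw [div_one] at key
    have keq : (fun N : ℕ =>
        ((((N:ℝ) - s) * Sa / N) /
          ((s * (∑ j, b j * ((Nf j N : ℝ) - (n j : ℝ))) + ((N:ℝ) - s) * Sa) / N)) *
          ((((Nf i N : ℝ) - (n i : ℝ))/N) / (((N:ℝ) - s)/N))) =ᶠ[atTop] (fun N : ℕ =>
        (((N:ℝ) - s) * Sa /
          (s * (∑ j, b j * ((Nf j N : ℝ) - (n j : ℝ))) + ((N:ℝ) - s) * Sa)) *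
          (((Nf i N : ℝ) - (n i : ℝ)) / ((N:ℝ) - s))) := by
      filter_upwards [eventually_ge_atTop 1] with N hN
      have hN0 : (N:ℝ) ≠ 0 := Nat.cast_ne_zero.mpr (by omega)
      rw [hcanc _ _ _ hN0, hcanc _ _ _ hN0]
    have := key.congr' keq
    rw [hSan]
    convert this using 2
    ring
end

section
/- Let N₁,…,N_m be positive integers with N = Σⱼ Nⱼ, let a₁,…,a_m > 0, b₁,…,b_m > 0 and r′ > 0 be real numbers, and suppose Σⱼ aⱼ Nⱼ > r′ Σⱼ bⱼ Nⱼ. Let δ be a real number with 0 < δ < ( Σⱼ aⱼ Nⱼ/N − r′ Σⱼ bⱼ Nⱼ/N ) / ( Σⱼ [ aⱼ + (N − 1) r′ bⱼ ] ). Then for every tuple of natural numbers n = (n₁,…,n_m) with nⱼ ≤ Nⱼ for all j and 0 < |n| < N (where |n| = Σⱼ nⱼ), if |nⱼ/|n| − Nⱼ/N| < δ for every j, then Σⱼ aⱼ nⱼ/|n| > r′ · Σⱼ bⱼ (Nⱼ − nⱼ)/(N − |n|). -/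
/-- If the mutants' distribution across environments is within `δ` of the
environments' population proportions, then the average fitness of mutants
exceeds `r'` times the average fitness of residents. -/
theorem stmt_15 (m : ℕ) (hm : 1 ≤ m) (Nv : Fin m → ℕ) (hNv : ∀ j, 0 < Nv j)
    (N : ℕ) (hN : N = ∑ j, Nv j)
    (a b : Fin m → ℝ) (ha : ∀ j, 0 < a j) (hb : ∀ j, 0 < b j)
    (r' : ℝ) (hr' : 0 < r')
    (hfit : r' * ∑ j, b j * (Nv j : ℝ) < ∑ j, a j * (Nv j : ℝ))
    (δ : ℝ) (hδ0 : 0 < δ)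
    (hδ : δ < ((∑ j, a j * ((Nv j : ℝ) / N)) - r' * ∑ j, b j * ((Nv j : ℝ) / N)) /
      (∑ j, (a j + ((N : ℝ) - 1) * r' * b j)))
    (n : Fin m → ℕ) (hn1 : ∀ j, n j ≤ Nv j)
    (hn2 : 0 < ∑ j, n j) (hn3 : ∑ j, n j < N)
    (hclose : ∀ j, |(n j : ℝ) / (∑ k, (n k : ℝ)) - (Nv j : ℝ) / N| < δ) :
    r' * ∑ j, b j * (((Nv j : ℝ) - (n j : ℝ)) / ((N : ℝ) - ∑ k, (n k : ℝ))) <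
      ∑ j, a j * ((n j : ℝ) / ∑ k, (n k : ℝ)) := by
  set S : ℝ := ∑ k, (n k : ℝ) with hSdef
  have hScast : S = ((∑ k, n k : ℕ) : ℝ) := by
    rw [hSdef]; push_cast; ring
  have hSpos : (0:ℝ) < S := by rw [hScast]; exact_mod_cast hn2
  have hS1 : (1:ℝ) ≤ S := by rw [hScast]; exact_mod_cast hn2
  have hSN : S ≤ (N:ℝ) - 1 := by
    have h : (∑ k, n k) + 1 ≤ N := hn3
    rw [hScast]
    have : ((∑ k, n k : ℕ) : ℝ) + 1 ≤ (N:ℝ) := by exact_mod_cast h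
    linarith
  have hNSpos : (0:ℝ) < (N:ℝ) - S := by linarith
  have hNS1 : (1:ℝ) ≤ (N:ℝ) - S := by linarith
  have hNpos : (0:ℝ) < (N:ℝ) := by linarith
  have hNne : (N:ℝ) ≠ 0 := ne_of_gt hNpos
  have hDpos : (0:ℝ) < ∑ j, (a j + ((N:ℝ) - 1) * r' * b j) := by
    apply Finset.sum_pos
    · intro j _
      have h1 : (0:ℝ) ≤ ((N:ℝ) - 1) * r' * b j := by
        apply mul_nonneg (mul_nonneg (by linarith) hr'.le) (hb j).le
      linarith [ha j]
    · have : Nonempty (Fin m) := Fin.pos_iff_nonempty.mp hm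
      exact Finset.univ_nonempty
  have hkey : δ * (∑ j, (a j + ((N:ℝ) - 1) * r' * b j)) <
      (∑ j, a j * ((Nv j : ℝ) / N)) - r' * ∑ j, b j * ((Nv j : ℝ) / N) :=
    (lt_div_iff₀ hDpos).mp hδ
  have h1 : ∀ j, b j * (((Nv j : ℝ) - (n j : ℝ)) / ((N : ℝ) - S)) ≤
      b j * ((Nv j : ℝ) / N) + δ * ((N:ℝ) - 1) * b j := by
    intro j
    have hc := (abs_lt.mp (hclose j)).1
    have hx : ((Nv j : ℝ) / N - δ) * S < (n j : ℝ) := by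
      have : (Nv j : ℝ) / N - δ < (n j : ℝ) / S := by linarith
      exact (lt_div_iff₀ hSpos).mp this
    have hq : (Nv j : ℝ) / N * N = (Nv j : ℝ) := div_mul_cancel₀ _ hNne
    have hdiv : ((Nv j : ℝ) - (n j : ℝ)) / ((N : ℝ) - S) ≤
        (Nv j : ℝ) / N + δ * ((N:ℝ) - 1) := by
      rw [div_le_iff₀ hNSpos]
      have haux : (0:ℝ) ≤ δ * (((N:ℝ) - 1) * ((N:ℝ) - S) - S) := by
        apply mul_nonneg hδ0.le
        nlinarith
      nlinarith [hx, hq]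
    calc b j * (((Nv j : ℝ) - (n j : ℝ)) / ((N : ℝ) - S))
        ≤ b j * ((Nv j : ℝ) / N + δ * ((N:ℝ) - 1)) :=
          mul_le_mul_of_nonneg_left hdiv (hb j).le
      _ = b j * ((Nv j : ℝ) / N) + δ * ((N:ℝ) - 1) * b j := by ring
  have h2 : ∀ j, a j * ((Nv j : ℝ) / N) - δ * a j ≤ a j * ((n j : ℝ) / S) := by
    intro j
    have hc := (abs_lt.mp (hclose j)).1
    nlinarith [mul_lt_mul_of_pos_left hc (ha j)]
  have H1 : ∑ j, b j * (((Nv j : ℝ) - (n j : ℝ)) / ((N : ℝ) - S)) ≤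
      ∑ j, (b j * ((Nv j : ℝ) / N) + δ * ((N:ℝ) - 1) * b j) :=
    Finset.sum_le_sum fun j _ => h1 j
  have H2 : ∑ j, (a j * ((Nv j : ℝ) / N) - δ * a j) ≤ ∑ j, a j * ((n j : ℝ) / S) :=
    Finset.sum_le_sum fun j _ => h2 j
  rw [Finset.sum_add_distrib] at H1
  rw [Finset.sum_sub_distrib] at H2
  rw [Finset.sum_add_distrib] at hkey
  have e1 : ∑ j, δ * ((N:ℝ) - 1) * b j = δ * ((N:ℝ) - 1) * ∑ j, b j := by
    rw [Finset.mul_sum]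
  have e2 : ∑ j, δ * a j = δ * ∑ j, a j := by rw [Finset.mul_sum]
  have e3 : ∑ j, ((N:ℝ) - 1) * r' * b j = ((N:ℝ) - 1) * r' * ∑ j, b j := by
    rw [Finset.mul_sum]
  rw [e1] at H1
  rw [e2] at H2
  rw [e3] at hkey
  have Hmul : r' * ∑ j, b j * (((Nv j : ℝ) - (n j : ℝ)) / ((N : ℝ) - S)) ≤
      r' * ((∑ j, b j * ((Nv j : ℝ) / N)) + δ * ((N:ℝ) - 1) * ∑ j, b j) :=
    mul_le_mul_of_nonneg_left H1 hr'.le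
  nlinarith [Hmul, H2, hkey]
end
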